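/- (Corollary 1, training phase) Let D ≥ 1, n ≥ 2, ỹ ∈ ℝ^D, and let X ∈ ℝ^{D×n} have all rows non-constant, with row-wise standardization Y(X) having columns y^{(i)}. Then: (i) for every g ∈ ℝ^D, the gradient with respect to X of Loss^grad(X; g) = Σ_{i=1}^n (y^{(i)} − ỹ)ᵀg is identically zero, so the mixed second derivative ∂²Loss^grad/∂X∂g is zero; and (ii) for every diagonal matrix H^diag ∈ ℝ^{D×D}, the gradient with respect to X of Loss^diag(X; H^diag) = (1/2)Σ_{i=1}^n (y^{(i)}−ỹ)ᵀH^diag(y^{(i)}−ỹ) is identically zero, so the mixed second derivative ∂²Loss^diag/∂X∂H^diag is zero. -/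

import Mathlib

/-!
Both losses are functions of the standardized rows only through their first two empirical
moments: `∑ᵢ yᵢ = 0` for every row, and `∑ᵢ yᵢ² = n` for every row with `σ ≠ 0`. Summing over the
samples, `Loss^grad` only sees the first moment, so it is constant everywhere, and for a diagonal
`H` the loss `Loss^diag` only sees the first two moments row by row, so it is constant on the
open set of matrices whose rows are all non-constant. Locally constant functions have zero
derivative.
-/

open scoped BigOperators

/-- Mini-batch mean of a feature dimension across `n` samples. -/
noncomputable def bmean {n : ℕ} (x : Fin n → ℝ) : ℝ := (∑ i, x i) / n

/-- Mini-batch standard deviation of a feature dimension across `n` samples. -/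
noncomputable def bstd {n : ℕ} (x : Fin n → ℝ) : ℝ :=
  Real.sqrt ((∑ i, (x i - bmean x) ^ 2) / n)

/-- `x` is non-constant: it differs from the constant vector of its mean. -/
def NonConstant {n : ℕ} (x : Fin n → ℝ) : Prop := x ≠ fun _ => bmean x

/-- The batch-normalization standardization phase (with ε = 0). -/
noncomputable def standardize {n : ℕ} (x : Fin n → ℝ) : Fin n → ℝ :=
  fun i => (x i - bmean x) / bstd x

open Filter Topology

section Standardize

variable {n : ℕ}

theorem sum_sub_bmean (x : Fin n → ℝ) : ∑ i, (x i - bmean x) = 0 := by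
  rcases eq_or_ne n 0 with rfl | hn
  · simp
  · rw [Finset.sum_sub_distrib, Finset.sum_const, Finset.card_univ, Fintype.card_fin,
      nsmul_eq_mul, bmean, mul_div_cancel₀ _ (Nat.cast_ne_zero.2 hn), sub_self]

theorem sum_standardize (x : Fin n → ℝ) : ∑ i, standardize x i = 0 := by
  simp only [standardize, ← Finset.sum_div, sum_sub_bmean, zero_div]

theorem sum_sq_standardize {x : Fin n → ℝ} (hσ : bstd x ≠ 0) :
    ∑ i, standardize x i ^ 2 = n := by
  -- with `n = 0` the variance is `_ / 0 = 0`, so `hσ` also rules out the empty batch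
  have hn : (n : ℝ) ≠ 0 := by
    rintro hn
    exact hσ (by simp [bstd, hn])
  have hσ2 : bstd x ^ 2 = (∑ i, (x i - bmean x) ^ 2) / n :=
    Real.sq_sqrt (div_nonneg (Finset.sum_nonneg fun _ _ => sq_nonneg _) (Nat.cast_nonneg n))
  have hsum : ∑ i, (x i - bmean x) ^ 2 = n * bstd x ^ 2 := by
    rw [hσ2]
    field_simp
  simp only [standardize, div_pow, ← Finset.sum_div, hsum]
  field_simp

theorem sum_sq_standardize_sub {x : Fin n → ℝ} (hσ : bstd x ≠ 0) (c : ℝ) :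
    ∑ i, (standardize x i - c) ^ 2 = n * (1 + c ^ 2) := by
  have hexpand : ∀ i, (standardize x i - c) ^ 2
      = standardize x i ^ 2 - 2 * c * standardize x i + c ^ 2 := fun i => by ring
  simp only [hexpand, Finset.sum_add_distrib, Finset.sum_sub_distrib, ← Finset.mul_sum,
    sum_standardize, sum_sq_standardize hσ, Finset.sum_const, Finset.card_univ,
    Fintype.card_fin, nsmul_eq_mul]
  ring

theorem NonConstant.bstd_pos {x : Fin n → ℝ} (hx : NonConstant x) : 0 < bstd x := by
  obtain ⟨i, hi⟩ : ∃ i, x i ≠ bmean x := by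
    by_contra! h
    exact hx (funext h)
  have hn : (0 : ℝ) < n := Nat.cast_pos.2 (Fin.pos i)
  have hvar : 0 < ∑ j, (x j - bmean x) ^ 2 :=
    Finset.sum_pos' (fun j _ => sq_nonneg _)
      ⟨i, Finset.mem_univ i, sq_pos_of_ne_zero (sub_ne_zero.2 hi)⟩
  exact Real.sqrt_pos.2 (div_pos hvar hn)

theorem continuous_bstd : Continuous (bstd : (Fin n → ℝ) → ℝ) := by
  unfold bstd bmean
  fun_prop

theorem eventually_bstd_ne_zero {ι : Type*} [Fintype ι] {X : ι → Fin n → ℝ}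
    (hX : ∀ d, NonConstant (X d)) : ∀ᶠ Z in 𝓝 X, ∀ d, bstd (Z d) ≠ 0 :=
  eventually_all.2 fun d =>
    ((continuous_bstd.comp (continuous_apply d)).continuousAt).eventually_ne (hX d).bstd_pos.ne'

end Standardize

theorem Matrix.IsDiag.sum_sum_mul_mul {ι R : Type*} [Fintype ι] [CommSemiring R]
    {H : Matrix ι ι R} (hH : H.IsDiag) (u v : ι → R) :
    ∑ j, ∑ k, u j * H j k * v k = ∑ j, H j j * (u j * v j) := by
  refine Finset.sum_congr rfl fun j _ => ?_
  rw [Finset.sum_eq_single j (fun k _ hkj => by rw [hH hkj.symm]; ring)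
    (fun hj => absurd (Finset.mem_univ j) hj)]
  ring

theorem corollary1_training_general (D n : ℕ)
    (ytil : Fin D → ℝ) (X : Fin D → Fin n → ℝ) (hX : ∀ d, NonConstant (X d)) :
    (∀ g : Fin D → ℝ,
      HasFDerivAt
        (fun Z : Fin D → Fin n → ℝ => ∑ i, ∑ d, (standardize (Z d) i - ytil d) * g d)
        (0 : (Fin D → Fin n → ℝ) →L[ℝ] ℝ) X) ∧
    (∀ Hdiag : Matrix (Fin D) (Fin D) ℝ, Hdiag.IsDiag →
      HasFDerivAt
        (fun Z : Fin D → Fin n → ℝ =>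
          (1 / 2 : ℝ) * ∑ i, ∑ j, ∑ k,
            (standardize (Z j) i - ytil j) * Hdiag j k * (standardize (Z k) i - ytil k))
        (0 : (Fin D → Fin n → ℝ) →L[ℝ] ℝ) X) := by
  constructor
  · intro g
    have hconst : (fun Z : Fin D → Fin n → ℝ => ∑ i, ∑ d, (standardize (Z d) i - ytil d) * g d)
        = fun _ => ∑ d, (0 - n * ytil d) * g d := by
      funext Z
      rw [Finset.sum_comm]
      simp [← Finset.sum_mul, Finset.sum_sub_distrib, sum_standardize]
    rw [hconst]
    exact hasFDerivAt_const _ _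
  · intro Hdiag hHdiag
    have hconst : (fun Z : Fin D → Fin n → ℝ =>
          (1 / 2 : ℝ) * ∑ i, ∑ j, ∑ k,
            (standardize (Z j) i - ytil j) * Hdiag j k * (standardize (Z k) i - ytil k))
        =ᶠ[𝓝 X] fun _ => (1 / 2 : ℝ) * ∑ j, Hdiag j j * (n * (1 + ytil j ^ 2)) := by
      filter_upwards [eventually_bstd_ne_zero hX] with Z hZ
      simp only [hHdiag.sum_sum_mul_mul, ← sq]
      rw [Finset.sum_comm]
      simp only [← Finset.mul_sum, sum_sq_standardize_sub (hZ _)]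
    exact (hasFDerivAt_const _ _).congr_of_eventuallyEq hconst

/-- Corollary 1, training phase: at any `X` with all rows non-constant,
(i) for every `g` the gradient of `Loss^grad(X; g)` with respect to `X` is zero, and
(ii) for every diagonal `H^diag` the gradient of `Loss^diag(X; H^diag)` with respect
to `X` is zero; hence the mixed second derivatives `∂²Loss^grad/∂X∂g` and
`∂²Loss^diag/∂X∂H^diag` vanish. -/
theorem corollary1_training (D n : ℕ) (hD : 1 ≤ D) (hn : 2 ≤ n)
    (ytil : Fin D → ℝ) (X : Fin D → Fin n → ℝ) (hX : ∀ d, NonConstant (X d)) :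
    (∀ g : Fin D → ℝ,
      HasFDerivAt
        (fun Z : Fin D → Fin n → ℝ => ∑ i, ∑ d, (standardize (Z d) i - ytil d) * g d)
        (0 : (Fin D → Fin n → ℝ) →L[ℝ] ℝ) X) ∧
    (∀ Hdiag : Matrix (Fin D) (Fin D) ℝ, Hdiag.IsDiag →
      HasFDerivAt
        (fun Z : Fin D → Fin n → ℝ =>
          (1 / 2 : ℝ) * ∑ i, ∑ j, ∑ k,
            (standardize (Z j) i - ytil j) * Hdiag j k * (standardize (Z k) i - ytil k))
        (0 : (Fin D → Fin n → ℝ) →L[ℝ] ℝ) X) :=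
  corollary1_training_general D n ytil X hX
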